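/- arXiv:1103.2171 — 6 statements merged into one kernel-verified Lean document; each statement's English description precedes it below -/
import Mathlib

section
/- Let K be a compact topological space, n ∈ ℕ, r ∈ ℕ, and let C : K → Matrix (Fin n) (Fin n) ℝ be continuous such that for every z ∈ K, C(z) is symmetric positive semidefinite with rank C(z) = r. Then there exists c > 0 such that for every z ∈ K and every u ∈ ℝⁿ orthogonal to the kernel of (the linear map induced by) C(z), one has ⟨C(z)u, u⟩ ≥ c‖u‖². Equivalently, the smallest nonzero eigenvalue of C(z) is uniformly bounded below by c over K. -/
open scoped RealInnerProductSpace
open Matrix Finset Module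

/-- Action of an `n × n` real matrix on a vector in `EuclideanSpace ℝ (Fin n)`. -/
noncomputable def mApp {n : ℕ} (A : Matrix (Fin n) (Fin n) ℝ)
    (v : EuclideanSpace ℝ (Fin n)) : EuclideanSpace ℝ (Fin n) :=
  Matrix.toEuclideanLin A v

section helpers

variable {n : ℕ}

lemma mApp_eigen (A : Matrix (Fin n) (Fin n) ℝ) (hH : A.IsHermitian) (i : Fin n) :
    mApp A (hH.eigenvectorBasis i) = hH.eigenvalues i • hH.eigenvectorBasis i := by
  ext j
  exact congrFun (hH.mulVec_eigenvectorBasis i) j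

lemma quadform (A : Matrix (Fin n) (Fin n) ℝ) (hH : A.IsHermitian)
    (u : EuclideanSpace ℝ (Fin n)) :
    ⟪mApp A u, u⟫ = ∑ i, hH.eigenvalues i * (hH.eigenvectorBasis.repr u i)^2 := by
  set B := hH.eigenvectorBasis with hB
  have h1 : mApp A u = ∑ i, (hH.eigenvalues i * B.repr u i) • B i := by
    conv_lhs => rw [← B.sum_repr u]
    simp only [mApp, map_sum]
    refine Finset.sum_congr rfl fun i _ => ?_
    rw [LinearMap.map_smul, show Matrix.toEuclideanLin A (B i) = mApp A (B i) from rfl,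
      mApp_eigen A hH i, smul_smul, mul_comm]
  rw [h1, sum_inner]
  refine Finset.sum_congr rfl fun i _ => ?_
  rw [real_inner_smul_left, ← B.repr_apply_apply]
  ring

lemma normsq (B : OrthonormalBasis (Fin n) ℝ (EuclideanSpace ℝ (Fin n)))
    (u : EuclideanSpace ℝ (Fin n)) :
    ‖u‖^2 = ∑ i, (B.repr u i)^2 := by
  have h : ‖u‖ = ‖B.repr u‖ := (B.repr.norm_map u).symm
  rw [h, EuclideanSpace.norm_eq, Real.sq_sqrt (by positivity)]
  simp [Real.norm_eq_abs, sq_abs]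

lemma repr_zero_of_orth (A : Matrix (Fin n) (Fin n) ℝ) (hH : A.IsHermitian)
    (u : EuclideanSpace ℝ (Fin n))
    (hu : u ∈ (LinearMap.ker (Matrix.toEuclideanLin A))ᗮ) (i : Fin n)
    (hi : hH.eigenvalues i = 0) : hH.eigenvectorBasis.repr u i = 0 := by
  have hk : hH.eigenvectorBasis i ∈ LinearMap.ker (Matrix.toEuclideanLin A) := by
    rw [LinearMap.mem_ker]
    show mApp A _ = 0
    rw [mApp_eigen A hH i, hi, zero_smul]
  have := hu _ hk
  rw [hH.eigenvectorBasis.repr_apply_apply]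
  exact this

lemma key (A : Matrix (Fin n) (Fin n) ℝ) (hA : A.PosSemidef) {c : ℝ} (_hc0 : 0 ≤ c)
    (hc : ∀ i, hA.1.eigenvalues i ≠ 0 → c ≤ hA.1.eigenvalues i)
    (u : EuclideanSpace ℝ (Fin n))
    (hu : u ∈ (LinearMap.ker (Matrix.toEuclideanLin A))ᗮ) :
    c * ‖u‖^2 ≤ ⟪mApp A u, u⟫ := by
  rw [quadform A hA.1 u, normsq hA.1.eigenvectorBasis u, Finset.mul_sum]
  refine Finset.sum_le_sum fun i _ => ?_
  by_cases hi : hA.1.eigenvalues i = 0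
  · rw [repr_zero_of_orth A hA.1 u hu i hi]
    simp
  · exact mul_le_mul_of_nonneg_right (hc i hi) (sq_nonneg _)

lemma finrank_orth_ker (A : Matrix (Fin n) (Fin n) ℝ) (r : ℕ) (hr : A.rank = r) :
    finrank ℝ ((LinearMap.ker (Matrix.toEuclideanLin A))ᗮ) = r := by
  have h1 : finrank ℝ (LinearMap.range (Matrix.toEuclideanLin A)) = r := by
    rw [← hr, A.rank_eq_finrank_range_toLin (PiLp.basisFun 2 ℝ (Fin n))
      (PiLp.basisFun 2 ℝ (Fin n))]
    rfl
  have h2 := LinearMap.finrank_range_add_finrank_ker (Matrix.toEuclideanLin A)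
  have h3 := Submodule.finrank_add_finrank_orthogonal
    (LinearMap.ker (Matrix.toEuclideanLin A))
  rw [finrank_euclideanSpace_fin] at h2 h3
  omega

lemma eig_lower_bound (A : Matrix (Fin n) (Fin n) ℝ) (hA : A.PosSemidef) (r : ℕ)
    (hr : A.rank = r) (V : Submodule ℝ (EuclideanSpace ℝ (Fin n)))
    (hV : finrank ℝ V = r) {c : ℝ} (hc0 : 0 ≤ c)
    (hc : ∀ u ∈ V, ‖u‖ = 1 → c < ⟪mApp A u, u⟫)
    (i : Fin n) (hi : hA.1.eigenvalues i ≠ 0) : c ≤ hA.1.eigenvalues i := by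
  classical
  by_contra hlt
  push_neg at hlt
  set B := hA.1.eigenvectorBasis with hB
  set T : Finset (Fin n) := insert i (univ.filter fun j => hA.1.eigenvalues j = 0) with hT
  have hcardnz : (univ.filter fun j => hA.1.eigenvalues j ≠ 0).card = r := by
    rw [← Fintype.card_subtype, ← hA.1.rank_eq_card_non_zero_eigs, hr]
  have hsplit := Finset.card_filter_add_card_filter_not
    (s := (univ : Finset (Fin n))) (p := fun j => hA.1.eigenvalues j = 0)
  simp only [Finset.card_univ, Fintype.card_fin] at hsplit
  have hcardz : (univ.filter fun j => hA.1.eigenvalues j = 0).card = n - r := by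
    have : (univ.filter fun j => ¬ hA.1.eigenvalues j = 0).card = r := hcardnz
    omega
  have hrn : r ≤ n := by
    have hle := Finset.card_filter_le (univ : Finset (Fin n))
      (fun j => hA.1.eigenvalues j ≠ 0)
    simp only [Finset.card_univ, Fintype.card_fin] at hle
    omega
  have hTcard : T.card = (n - r) + 1 := by
    rw [hT, Finset.card_insert_of_notMem (by simp [hi]), hcardz]
  set W := Submodule.span ℝ (Set.range (⇑B ∘ (Subtype.val : {x // x ∈ T} → Fin n))) with hW
  have hWrank : finrank ℝ W = (n - r) + 1 := by
    rw [hW, finrank_span_eq_card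
      (B.orthonormal.linearIndependent.comp Subtype.val Subtype.val_injective)]
    simp [hTcard]
  have hnd : ¬ Disjoint V W := by
    intro hd
    have := Submodule.finrank_add_finrank_le_of_disjoint hd
    rw [hV, hWrank, finrank_euclideanSpace_fin] at this
    omega
  rw [Submodule.disjoint_def] at hnd
  push_neg at hnd
  obtain ⟨w, hwV, hwW, hw0⟩ := hnd
  set w' := ‖w‖⁻¹ • w with hw'
  have hw'norm : ‖w'‖ = 1 := norm_smul_inv_norm hw0
  have hw'V : w' ∈ V := V.smul_mem _ hwV
  have hw'W : w' ∈ W := W.smul_mem _ hwW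
  have hgt := hc w' hw'V hw'norm
  -- coefficients of w' vanish off T
  have hrep0 : ∀ j ∉ T, B.repr w' j = 0 := by
    intro j hj
    rw [B.repr_apply_apply]
    refine Submodule.span_induction ?_ ?_ ?_ ?_ hw'W
    · rintro x ⟨⟨k, hk⟩, rfl⟩
      exact B.orthonormal.2 (fun h => hj (h ▸ hk))

    · exact inner_zero_right _
    · intro x y _ _ hx hy
      rw [inner_add_right, hx, hy, add_zero]
    · intro a x _ hx
      rw [real_inner_smul_right, hx, mul_zero]
  -- upper bound on the quadratic form of w'
  have hle : ∀ j ∈ T, hA.1.eigenvalues j ≤ c := by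
    intro j hj
    rcases Finset.mem_insert.mp hj with h | h
    · rw [h]; exact le_of_lt hlt
    · rw [(Finset.mem_filter.mp h).2]; exact hc0
  have hupper : ⟪mApp A w', w'⟫ ≤ c := by
    rw [quadform A hA.1 w']
    have hsum : ∑ j, hA.1.eigenvalues j * (B.repr w' j)^2
        = ∑ j ∈ T, hA.1.eigenvalues j * (B.repr w' j)^2 := by
      refine (Finset.sum_subset T.subset_univ ?_).symm
      intro j _ hj
      rw [hrep0 j hj]
      ring
    rw [hsum]
    calc ∑ j ∈ T, hA.1.eigenvalues j * (B.repr w' j)^2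
        ≤ ∑ j ∈ T, c * (B.repr w' j)^2 :=
          Finset.sum_le_sum fun j hj =>
            mul_le_mul_of_nonneg_right (hle j hj) (sq_nonneg _)
      _ ≤ ∑ j, c * (B.repr w' j)^2 :=
          Finset.sum_le_sum_of_subset_of_nonneg T.subset_univ
            (fun j _ _ => mul_nonneg hc0 (sq_nonneg _))
      _ = c * ‖w'‖^2 := by rw [← Finset.mul_sum, ← normsq B w']
      _ = c := by rw [hw'norm]; ring
  linarith

end helpers

/-- For a continuous family `z ↦ C z` of symmetric positive semidefinite matrices of
constant rank `r` over a compact space `K`, the smallest nonzero eigenvalue is uniformly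
bounded below: there is `c > 0` with `⟪C z • u, u⟫ ≥ c ‖u‖²` for every `z ∈ K` and every
`u` orthogonal to the kernel of `C z`. -/
theorem uniform_lower_bound_on_orthogonal_complement_of_kernel
    (K : Type*) [TopologicalSpace K] [CompactSpace K] (n r : ℕ)
    (C : K → Matrix (Fin n) (Fin n) ℝ) (hCont : Continuous C)
    (hpsd : ∀ z, (C z).PosSemidef) (hrank : ∀ z, (C z).rank = r) :
    ∃ c > (0 : ℝ), ∀ z : K, ∀ u : EuclideanSpace ℝ (Fin n),
      u ∈ (LinearMap.ker (Matrix.toEuclideanLin (C z)))ᗮ →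
        c * ‖u‖ ^ 2 ≤ ⟪mApp (C z) u, u⟫ := by
  classical
  rcases isEmpty_or_nonempty K with hK | hK
  · exact ⟨1, one_pos, fun z => (IsEmpty.false z).elim⟩
  rcases Nat.eq_zero_or_pos r with hr0 | hrpos
  · refine ⟨1, one_pos, fun z u hu => ?_⟩
    have h := finrank_orth_ker (C z) r (hrank z)
    rw [hr0] at h
    have hbot : (LinearMap.ker (Matrix.toEuclideanLin (C z)))ᗮ = ⊥ :=
      Submodule.finrank_eq_zero.mp h
    rw [hbot, Submodule.mem_bot] at hu
    subst hu
    simp [mApp]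
  -- continuity of the quadratic form jointly in (z, u)
  have hF : Continuous (fun p : K × EuclideanSpace ℝ (Fin n) =>
      ⟪mApp (C p.1) p.2, p.2⟫) := by
    have h1 : Continuous (fun p : K × EuclideanSpace ℝ (Fin n) => mApp (C p.1) p.2) := by
      have : Continuous (fun p : K × EuclideanSpace ℝ (Fin n) =>
          (C p.1) *ᵥ (WithLp.equiv 2 (Fin n → ℝ) p.2)) :=
        (hCont.comp continuous_fst).matrix_mulVec
          ((PiLp.continuous_ofLp 2 (fun _ : Fin n => ℝ)).comp continuous_snd)
      exact (PiLp.continuous_toLp 2 (fun _ : Fin n => ℝ)).comp this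
    exact h1.inner continuous_snd
  have loc : ∀ z₀ : K, ∃ (c₀ : ℝ), 0 < c₀ ∧ ∃ (U : Set K), IsOpen U ∧ z₀ ∈ U ∧
      ∀ z ∈ U, ∀ u ∈ (LinearMap.ker (Matrix.toEuclideanLin (C z)))ᗮ,
        c₀ * ‖u‖^2 ≤ ⟪mApp (C z) u, u⟫ := by
    intro z₀
    set hH := (hpsd z₀).1 with hHdef
    set s : Finset (Fin n) := univ.filter (fun i => hH.eigenvalues i ≠ 0) with hs
    have hscard : s.card = r := by
      rw [hs, ← Fintype.card_subtype, ← hH.rank_eq_card_non_zero_eigs, hrank z₀]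
    have hsne : s.Nonempty := Finset.card_pos.mp (by omega)
    set μ := s.inf' hsne hH.eigenvalues with hμ
    have hμpos : 0 < μ := by
      rw [hμ, Finset.lt_inf'_iff]
      intro i hi
      exact lt_of_le_of_ne ((hpsd z₀).eigenvalues_nonneg i)
        (Ne.symm (Finset.mem_filter.mp hi).2)
    set V := (LinearMap.ker (Matrix.toEuclideanLin (C z₀)))ᗮ with hVdef
    have hVrank : finrank ℝ V = r := finrank_orth_ker _ r (hrank z₀)
    set S : Set (EuclideanSpace ℝ (Fin n)) := Metric.sphere 0 1 ∩ ↑V with hS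
    have hScompact : IsCompact S :=
      (isCompact_sphere 0 1).inter_right (Submodule.closed_of_finiteDimensional V)
    have hev : ∀ᶠ z in nhds z₀, ∀ u ∈ S, μ/2 < ⟪mApp (C z) u, u⟫ := by
      refine hScompact.eventually_forall_of_forall_eventually (fun u huS => ?_)
      have hn : ‖u‖ = 1 := by
        simpa using mem_sphere_zero_iff_norm.mp huS.1
      have h0 : μ/2 < ⟪mApp (C z₀) u, u⟫ := by
        have hk := key (C z₀) (hpsd z₀) (le_of_lt hμpos)
          (fun i hi => Finset.inf'_le hH.eigenvalues (Finset.mem_filter.mpr ⟨Finset.mem_univ i, hi⟩))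
          u huS.2
        rw [hn] at hk
        simp only [one_pow, mul_one] at hk
        linarith
      have := hF.continuousAt (x := (z₀, u))
      exact this.eventually_const_lt h0
    rw [eventually_nhds_iff] at hev
    obtain ⟨U, hUprop, hUopen, hz₀U⟩ := hev
    refine ⟨μ/2, half_pos hμpos, U, hUopen, hz₀U, fun z hz u hu => ?_⟩
    refine key (C z) (hpsd z) (le_of_lt (half_pos hμpos)) (fun i hi => ?_) u hu
    refine eig_lower_bound (C z) (hpsd z) r (hrank z) V hVrank
      (le_of_lt (half_pos hμpos)) (fun w hwV hwn => ?_) i hi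
    exact hUprop z hz w ⟨mem_sphere_zero_iff_norm.mpr hwn, hwV⟩
  choose c₀ hc₀ U hUopen hzU hU using loc
  obtain ⟨t, ht⟩ := isCompact_univ.elim_finite_subcover U hUopen
    (fun z _ => Set.mem_iUnion.2 ⟨z, hzU z⟩)
  have htne : t.Nonempty := by
    obtain ⟨z⟩ := hK
    obtain ⟨i, hi⟩ := Set.mem_iUnion.mp (ht (Set.mem_univ z))
    obtain ⟨hit, _⟩ := Set.mem_iUnion.mp hi
    exact ⟨i, hit⟩
  refine ⟨t.inf' htne c₀, ?_, ?_⟩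
  · exact (Finset.lt_inf'_iff htne).2 fun i _ => hc₀ i
  · intro z u hu
    obtain ⟨i, hi⟩ := Set.mem_iUnion.mp (ht (Set.mem_univ z))
    obtain ⟨hit, hiU⟩ := Set.mem_iUnion.mp hi
    calc t.inf' htne c₀ * ‖u‖^2
        ≤ c₀ i * ‖u‖^2 :=
          mul_le_mul_of_nonneg_right (Finset.inf'_le _ hit) (sq_nonneg _)
      _ ≤ _ := hU i z hiU u hu
end

section
/- Let K be a compact topological space, n ∈ ℕ, r ∈ ℕ, and let C, B : K → Matrix (Fin n) (Fin n) ℝ be continuous with C(z) and B(z) symmetric for all z ∈ K. Assume that for every z ∈ K, C(z) is positive semidefinite with rank C(z) = r, and that ker C(z) ⊆ ker B(z) (kernels of the induced linear maps). Then there exists h₀ > 0 such that for every z ∈ K and every h with 0 ≤ h ≤ h₀, the matrix C(z) + h² • B(z) is positive semidefinite. -/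
/-!
Let `c > 0` bound the nonzero eigenvalues of `C z` from below. Splitting `x = y + p` with
`y ∈ range (C z)` and `p ∈ ker (C z) ⊆ ker (B z)` gives
`⟪(C z + t B z) x, x⟫ = ⟪(C z + t B z) y, y⟫ ≥ (c - t ‖B z‖) ‖y‖²`, which is nonnegative for small
`t ≥ 0`. By Courant–Fischer, a perturbation of norm `δ` that does not raise the rank lowers the
least nonzero eigenvalue by at most `δ`; so near each point of `K` one `c` works, and compactness
of `K` makes it uniform.
-/

open LinearMap Module Submodule Module.End Filter Topology
open scoped RealInnerProductSpace

section InnerProductSpace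

variable {E : Type*} [NormedAddCommGroup E] [InnerProductSpace ℝ E]

def LinearMap.IsCoerciveOnRange (T : E →ₗ[ℝ] E) (c : ℝ) : Prop :=
  ∀ x ∈ range T, c * ‖x‖ ^ 2 ≤ ⟪T x, x⟫

theorem LinearMap.IsSymmetric.inner_map_add_of_mem_ker {T : E →ₗ[ℝ] E} (hT : T.IsSymmetric)
    (x : E) {y : E} (hy : y ∈ ker T) : ⟪T (x + y), x + y⟫ = ⟪T x, x⟫ := by
  rw [mem_ker] at hy
  rw [map_add, hy, add_zero, inner_add_right, hT x y, hy, inner_zero_right, add_zero]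

variable [FiniteDimensional ℝ E]

/-- Courant–Fischer: by the dimension count, `V` meets `ker T ⊔ ℝ ∙ e` for an eigenvector `e`
of `μ`, and on that space the quadratic form of `T` is at most `μ ‖x‖²`. -/
theorem LinearMap.IsSymmetric.le_of_hasEigenvalue {T : E →ₗ[ℝ] E} (hT : T.IsSymmetric)
    {V : Submodule ℝ E} (hV : finrank ℝ E ≤ finrank ℝ V + finrank ℝ (ker T)) {c μ : ℝ}
    (hc : 0 < c) (hcV : ∀ x ∈ V, c * ‖x‖ ^ 2 ≤ ⟪T x, x⟫) (hμ : HasEigenvalue T μ)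
    (hμ0 : μ ≠ 0) : c ≤ μ := by
  obtain ⟨e, he⟩ := hμ.exists_hasEigenvector
  have hTe : T e = μ • e := he.apply_eq_smul
  have he_ker : e ∉ ker T := fun h => he.2 (by simpa [hTe, hμ0] using h)
  have hdim : finrank ℝ E < finrank ℝ V + finrank ℝ (ker T ⊔ (ℝ ∙ e) : Submodule ℝ E) := by
    have := finrank_sup_add_finrank_inf_eq (ker T) (ℝ ∙ e)
    rw [((disjoint_span_singleton' he.2).2 he_ker).eq_bot, finrank_bot,
      finrank_span_singleton he.2] at this
    omega
  obtain ⟨x, ⟨hxV, hxU⟩, hx0⟩ : ∃ x ∈ V ⊓ (ker T ⊔ (ℝ ∙ e)), x ≠ 0 := by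
    by_contra! h
    exact hdim.not_ge <| finrank_add_finrank_le_of_disjoint <|
      disjoint_def.2 fun x hV hU => h x ⟨hV, hU⟩
  obtain ⟨p, hp, y, hy, rfl⟩ := mem_sup.1 hxU
  obtain ⟨s, rfl⟩ := mem_span_singleton.1 hy
  have hTse : T (s • e) = μ • s • e := by rw [map_smul, hTe, smul_comm]
  have hpe : ⟪p, s • e⟫ = 0 := by
    have : s • e = T (μ⁻¹ • s • e) := by
      rw [map_smul, hTse, smul_smul, inv_mul_cancel₀ hμ0, one_smul]
    rw [this, ← hT, mem_ker.1 hp, inner_zero_left]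
  have hnorm : ‖p + s • e‖ ^ 2 = ‖p‖ ^ 2 + ‖s • e‖ ^ 2 := by
    simpa only [sq] using norm_add_sq_eq_norm_sq_add_norm_sq_real hpe
  have hquad : ⟪T (p + s • e), p + s • e⟫ = μ * ‖s • e‖ ^ 2 := by
    rw [add_comm, hT.inner_map_add_of_mem_ker _ hp, hTse, real_inner_smul_left,
      real_inner_self_eq_norm_sq]
  have hpos : 0 < ‖p + s • e‖ ^ 2 := by positivity
  have hcx := hcV _ hxV
  rw [hquad] at hcx
  by_contra! hlt
  rcases le_or_gt 0 μ with hμ | hμ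
  · nlinarith [sq_nonneg ‖p‖]
  · nlinarith [sq_nonneg ‖s • e‖]

theorem LinearMap.IsSymmetric.isCoerciveOnRange {T : E →ₗ[ℝ] E} (hT : T.IsSymmetric) {c : ℝ}
    (hc : ∀ μ, HasEigenvalue T μ → μ ≠ 0 → c ≤ μ) : T.IsCoerciveOnRange c := by
  rintro _ ⟨y, rfl⟩
  set b := hT.eigenvectorBasis rfl
  set ev := hT.eigenvalues rfl
  have hrepr : ∀ v i, b.repr (T v) i = ev i * b.repr v i :=
    hT.eigenvectorBasis_apply_self_apply rfl
  rw [← b.repr.norm_map, EuclideanSpace.real_norm_sq_eq, ← b.repr.inner_map_map,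
    PiLp.inner_apply, Finset.mul_sum]
  refine Finset.sum_le_sum fun i _ => ?_
  simp only [hrepr, RCLike.inner_apply, conj_trivial]
  rcases eq_or_ne (ev i) 0 with h0 | h0
  · simp [h0]
  · have := hc (ev i) (by simpa using hT.hasEigenvalue_eigenvalues rfl i) h0
    nlinarith [sq_nonneg (ev i * b.repr y i)]

theorem LinearMap.IsPositive.exists_pos_le_of_hasEigenvalue {T : E →ₗ[ℝ] E}
    (hT : T.IsPositive) : ∃ c > 0, ∀ μ, HasEigenvalue T μ → μ ≠ 0 → c ≤ μ := by
  have hle : ∀ μ ∈ {μ | HasEigenvalue T μ}, ∀ᶠ c in 𝓝[>] (0 : ℝ), μ ≠ 0 → c ≤ μ := by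
    intro μ hμ
    by_cases hμ0 : μ = 0
    · exact .of_forall fun _ h => absurd hμ0 h
    have hμpos : 0 ≤ μ := eigenvalue_nonneg_of_nonneg hμ hT.inner_nonneg_right
    filter_upwards [nhdsWithin_le_nhds (eventually_le_nhds (hμpos.lt_of_ne' hμ0))]
      with c hc _ using hc
  obtain ⟨c, hc, hpos⟩ :=
    (((Module.End.finite_hasEigenvalue T).eventually_all.2 hle).and self_mem_nhdsWithin).exists
  exact ⟨c, hpos, hc⟩

theorem LinearMap.IsCoerciveOnRange.of_finrank_range_le {T T' : E →ₗ[ℝ] E} {c δ : ℝ}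
    (hTc : T.IsCoerciveOnRange c) (hT' : T'.IsSymmetric)
    (hrank : finrank ℝ (range T') ≤ finrank ℝ (range T)) (hδc : δ < c)
    (hδ : ∀ x, ⟪T x, x⟫ - δ * ‖x‖ ^ 2 ≤ ⟪T' x, x⟫) : T'.IsCoerciveOnRange (c - δ) := by
  refine hT'.isCoerciveOnRange fun μ hμ hμ0 => hT'.le_of_hasEigenvalue (V := range T) ?_
    (sub_pos.2 hδc) (fun x hx => ?_) hμ hμ0
  · have := T'.finrank_range_add_finrank_ker
    omega
  · linarith [hTc x hx, hδ x]

theorem LinearMap.IsCoerciveOnRange.isPositive_add_smul {T S : E →ₗ[ℝ] E} {c M t : ℝ}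
    (hTc : T.IsCoerciveOnRange c) (hT : T.IsSymmetric) (hS : S.IsSymmetric)
    (hker : ker T ≤ ker S) (hM : ∀ x, -(M * ‖x‖ ^ 2) ≤ ⟪S x, x⟫) (ht : 0 ≤ t)
    (htM : t * M ≤ c) : (T + t • S).IsPositive := by
  refine (isPositive_iff _).2 ⟨hT.add (hS.smul (conj_trivial t)), fun x => ?_⟩
  obtain ⟨y, hy, z, hz, rfl⟩ := (range T).exists_add_mem_mem_orthogonal x
  rw [hT.orthogonal_range] at hz
  rw [add_apply, smul_apply, inner_add_left, real_inner_smul_left,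
    hT.inner_map_add_of_mem_ker _ hz, hS.inner_map_add_of_mem_ker _ (hker hz)]
  nlinarith [hTc y hy, hM y, sq_nonneg ‖y‖]

end InnerProductSpace

namespace Matrix

open scoped Matrix.Norms.L2Operator

variable {n : Type*} [Fintype n] [DecidableEq n]

theorem rank_eq_finrank_range_toEuclideanLin {𝕜 m : Type*} [RCLike 𝕜] [Fintype m]
    (A : Matrix m n 𝕜) : A.rank = finrank 𝕜 (range (toEuclideanLin A)) := by
  rw [toEuclideanLin_eq_toLin_orthonormal]
  exact A.rank_eq_finrank_range_toLin _ _

theorem abs_inner_toEuclideanLin_self_le (A : Matrix n n ℝ) (x : EuclideanSpace ℝ n) :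
    |⟪toEuclideanLin A x, x⟫| ≤ ‖A‖ * ‖x‖ ^ 2 := by
  calc |⟪toEuclideanLin A x, x⟫| ≤ ‖toEuclideanCLM (n := n) (𝕜 := ℝ) A x‖ * ‖x‖ :=
        abs_real_inner_le_norm _ _
    _ ≤ ‖A‖ * ‖x‖ * ‖x‖ := by
        gcongr
        exact (toEuclideanCLM (n := n) (𝕜 := ℝ) A).le_opNorm x
    _ = ‖A‖ * ‖x‖ ^ 2 := by ring

theorem PosSemidef.exists_pos_posSemidef_add_smul {A₀ : Matrix n n ℝ} (hA₀ : A₀.PosSemidef) :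
    ∃ c > 0, ∀ A B : Matrix n n ℝ, A.PosSemidef → A.rank = A₀.rank → B.IsSymm →
      ker (toEuclideanLin A) ≤ ker (toEuclideanLin B) →
      ∀ t : ℝ, 0 ≤ t → ‖A - A₀‖ + t * ‖B‖ < c → (A + t • B).PosSemidef := by
  have hpos {A : Matrix n n ℝ} (hA : A.PosSemidef) := isPositive_toEuclideanLin_iff.2 hA
  obtain ⟨c, hc, hcA₀⟩ := (hpos hA₀).exists_pos_le_of_hasEigenvalue
  refine ⟨c, hc, fun A B hA hrank hB hker t ht hsmall => ?_⟩
  have htB : 0 ≤ t * ‖B‖ := by positivity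
  have hcA : (toEuclideanLin A).IsCoerciveOnRange (c - ‖A - A₀‖) := by
    refine ((hpos hA₀).isSymmetric.isCoerciveOnRange hcA₀).of_finrank_range_le
      (hpos hA).isSymmetric ?_ (by linarith) fun x => ?_
    · rw [← rank_eq_finrank_range_toEuclideanLin, ← rank_eq_finrank_range_toEuclideanLin,
        hrank]
    · have := neg_le_of_abs_le ((A - A₀).abs_inner_toEuclideanLin_self_le x)
      rw [map_sub, LinearMap.sub_apply, inner_sub_left] at this
      linarith
  rw [← isPositive_toEuclideanLin_iff, map_add, map_smul]
  exact hcA.isPositive_add_smul (hpos hA).isSymmetric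
    (isSymmetric_toEuclideanLin_iff.2 (isHermitian_iff_isSymm.2 hB)) hker
    (fun x => neg_le_of_abs_le (B.abs_inner_toEuclideanLin_self_le x)) ht (by linarith)

end Matrix

theorem posSemidef_of_small_symmetric_perturbation_general
    (K : Type*) [TopologicalSpace K] [CompactSpace K] (n r : ℕ)
    (C B : K → Matrix (Fin n) (Fin n) ℝ)
    (hCcont : Continuous C) (hBcont : Continuous B)
    (hBsym : ∀ z, (B z).IsSymm)
    (hpsd : ∀ z, (C z).PosSemidef) (hrank : ∀ z, (C z).rank = r)
    (hker : ∀ z, LinearMap.ker (Matrix.toEuclideanLin (C z)) ≤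
      LinearMap.ker (Matrix.toEuclideanLin (B z))) :
    ∃ h₀ > (0 : ℝ), ∀ z : K, ∀ h : ℝ, 0 ≤ h → h ≤ h₀ →
      (C z + h ^ 2 • B z).PosSemidef := by
  have hlocal (z₀ : K) :
      ∀ᶠ p : ℝ × K in 𝓝 (0, z₀), (C p.2 + p.1 ^ 2 • B p.2).PosSemidef := by
    obtain ⟨c, hc, hC⟩ := (hpsd z₀).exists_pos_posSemidef_add_smul
    open scoped Matrix.Norms.L2Operator in
    have hnear : ∀ᶠ p : ℝ × K in 𝓝 (0, z₀), ‖C p.2 - C z₀‖ + p.1 ^ 2 * ‖B p.2‖ < c :=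
      ContinuousAt.eventually_lt (by fun_prop) continuousAt_const (by simpa using hc)
    filter_upwards [hnear] with ⟨h, z⟩ hsmall
    exact hC _ _ (hpsd z) ((hrank z).trans (hrank z₀).symm) (hBsym z) (hker z) _ (sq_nonneg h)
      hsmall
  obtain ⟨ε, hε, hball⟩ := Metric.eventually_nhds_iff.1 <|
    isCompact_univ.eventually_forall_of_forall_eventually
      (P := fun h z => (C z + h ^ 2 • B z).PosSemidef) fun z₀ _ => hlocal z₀
  refine ⟨ε / 2, half_pos hε, fun z h h0 hle => hball ?_ z trivial⟩
  rw [Real.dist_0_eq_abs, abs_of_nonneg h0]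
  linarith

/-- Uniform positive semidefiniteness of a perturbed family: if `C z` is a continuous
family of symmetric positive semidefinite matrices of constant rank `r` over a compact
space `K`, and `B z` is a continuous family of symmetric matrices with
`ker (C z) ⊆ ker (B z)`, then there is `h₀ > 0` such that `C z + h² • B z` is positive
semidefinite for all `z ∈ K` and all `0 ≤ h ≤ h₀`. -/
theorem posSemidef_of_small_symmetric_perturbation
    (K : Type*) [TopologicalSpace K] [CompactSpace K] (n r : ℕ)
    (C B : K → Matrix (Fin n) (Fin n) ℝ)
    (hCcont : Continuous C) (hBcont : Continuous B)
    (hCsym : ∀ z, (C z).IsSymm) (hBsym : ∀ z, (B z).IsSymm)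
    (hpsd : ∀ z, (C z).PosSemidef) (hrank : ∀ z, (C z).rank = r)
    (hker : ∀ z, LinearMap.ker (Matrix.toEuclideanLin (C z)) ≤
      LinearMap.ker (Matrix.toEuclideanLin (B z))) :
    ∃ h₀ > (0 : ℝ), ∀ z : K, ∀ h : ℝ, 0 ≤ h → h ≤ h₀ →
      (C z + h ^ 2 • B z).PosSemidef :=
  posSemidef_of_small_symmetric_perturbation_general K n r C B hCcont hBcont hBsym hpsd hrank hker
end

section
/- Noether's theorem with Rayleigh dissipation: let n ∈ ℕ; let M, D : ℝⁿ → Matrix (Fin n) (Fin n) ℝ be C¹ with M(q) symmetric positive definite and D(q) symmetric positive semidefinite for all q; let V : ℝⁿ → ℝ be C¹; set H(q,p) = ½⟨p, M(q)⁻¹p⟩ + V(q); let ε ≥ 0. Let a : ℝⁿ → ℝⁿ be C¹ and assume: (i) (Killing condition) for all q, u ∈ ℝⁿ, ⟨(D_{a(q)}M)(q) u, u⟩ + 2⟨M(q) (Da(q) u), u⟩ = 0, where (D_{a(q)}M)(q) is the directional derivative of M at q in the direction a(q) and Da(q) is the Jacobian of a at q; (ii) ⟨∇V(q), a(q)⟩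 = 0 for all q; (iii) D(q) a(q) = 0 for all q. Then along every differentiable solution (q, p) of the damped system q' = M(q)⁻¹p, p' = −∇_qH(q,p) − ε D(q)M(q)⁻¹p, the momentum J(q,p) := ⟨p, a(q)⟩ is constant in time. -/
open scoped RealInnerProductSpace

/-!
Along a solution, `d/dt ⟪p, a q⟫ = ⟪p', a q⟫ + ⟪p, Da(q) u⟫` with `u = M(q)⁻¹ p = q'`.
Since the derivative of `x ↦ M(x)⁻¹` is `-M⁻¹ (DM) M⁻¹` and `M⁻¹` is symmetric, the kinetic part
of `⟪-∇_q H, a⟫` is `½ ⟪(D_a M) u, u⟫`, while `⟪p, Da u⟫ = ⟪M (Da u), u⟫`; together they make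
half the Killing expression. The potential term vanishes by invariance of `V`, and the
dissipation term `⟪D u, a⟫ = ⟪u, D a⟫` by symmetry of `D`.
-/

section MatrixAction

variable {n : ℕ}

lemma mApp_mul (A B : Matrix (Fin n) (Fin n) ℝ) (v : EuclideanSpace ℝ (Fin n)) :
    mApp (A * B) v = mApp A (mApp B v) := by
  simp [mApp]

lemma mApp_mApp_inv {A : Matrix (Fin n) (Fin n) ℝ} (hA : IsUnit A.det)
    (v : EuclideanSpace ℝ (Fin n)) : mApp A (mApp A⁻¹ v) = v := by
  rw [← mApp_mul, Matrix.mul_nonsing_inv _ hA]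
  simp [mApp]

lemma Matrix.IsHermitian.inner_mApp_left {A : Matrix (Fin n) (Fin n) ℝ} (hA : A.IsHermitian)
    (u v : EuclideanSpace ℝ (Fin n)) : ⟪mApp A u, v⟫ = ⟪u, mApp A v⟫ :=
  Matrix.isSymmetric_toEuclideanLin_iff.2 hA u v

noncomputable def innerMAppCLM (u v : EuclideanSpace ℝ (Fin n)) :
    Matrix (Fin n) (Fin n) ℝ →L[ℝ] ℝ :=
  LinearMap.toContinuousLinearMap
    ((innerₛₗ ℝ u).comp ((LinearMap.applyₗ v).comp Matrix.toEuclideanLin.toLinearMap))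

lemma innerMAppCLM_apply (u v : EuclideanSpace ℝ (Fin n)) (A : Matrix (Fin n) (Fin n) ℝ) :
    innerMAppCLM u v A = ⟪u, mApp A v⟫ := rfl

end MatrixAction

section MatrixCalculus

-- Any norm on matrices gives the same derivatives; this one makes them a normed algebra, as
-- `hasFDerivAt_ringInverse` requires.
attribute [local instance] Matrix.linftyOpNormedRing Matrix.linftyOpNormedAlgebra

variable {E : Type*} [NormedAddCommGroup E] [NormedSpace ℝ E]

lemma hasFDerivAt_matrix_of_entries {m : Type*} [Fintype m] [DecidableEq m]
    {M : E → Matrix m m ℝ} {x : E} (hM : ∀ i j, DifferentiableAt ℝ (fun y => M y i j) x) :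
    ∃ L : E →L[ℝ] Matrix m m ℝ, HasFDerivAt M L x ∧
      ∀ v, L v = Matrix.of fun i j => fderiv ℝ (fun y => M y i j) x v := by
  have hentries : HasFDerivAt (fun y i j => M y i j)
      (ContinuousLinearMap.pi fun i => ContinuousLinearMap.pi fun j =>
        fderiv ℝ (fun y => M y i j) x) x :=
    hasFDerivAt_pi.2 fun i => hasFDerivAt_pi.2 fun j => (hM i j).hasFDerivAt
  let ofCLE : (m → m → ℝ) ≃L[ℝ] Matrix m m ℝ := (Matrix.ofLinearEquiv ℝ).toContinuousLinearEquiv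
  exact ⟨_, ofCLE.hasFDerivAt.comp x hentries, fun _ => rfl⟩

lemma HasFDerivAt.matrix_inv {m : Type*} [Fintype m] [DecidableEq m]
    {M : E → Matrix m m ℝ} {L : E →L[ℝ] Matrix m m ℝ} {x : E}
    (hM : HasFDerivAt M L x) (hx : IsUnit (M x)) :
    HasFDerivAt (fun y => (M y)⁻¹)
      ((-ContinuousLinearMap.mulLeftRight ℝ _ (M x)⁻¹ (M x)⁻¹).comp L) x := by
  obtain ⟨U, hU⟩ := hx
  have hinv : ((U⁻¹ : _ˣ) : Matrix m m ℝ) = (M x)⁻¹ := by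
    rw [Matrix.nonsing_inv_eq_ringInverse, ← hU, Ring.inverse_unit]
  have h := hasFDerivAt_ringInverse (𝕜 := ℝ) U
  rw [hU, hinv] at h
  have hfun : (fun y => (M y)⁻¹) = Ring.inverse ∘ M :=
    funext fun y => Matrix.nonsing_inv_eq_ringInverse _
  rw [hfun]
  exact h.comp x hM

lemma HasFDerivAt.inner_mApp_inv {n : ℕ} {M : E → Matrix (Fin n) (Fin n) ℝ}
    {L : E →L[ℝ] Matrix (Fin n) (Fin n) ℝ} {x : E}
    (hM : HasFDerivAt M L x) (hsymm : (M x).IsHermitian) (hx : IsUnit (M x))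
    (P : EuclideanSpace ℝ (Fin n)) :
    HasFDerivAt (fun y => ⟪P, mApp (M y)⁻¹ P⟫)
      (-(innerMAppCLM (mApp (M x)⁻¹ P) (mApp (M x)⁻¹ P)).comp L) x := by
  refine ((innerMAppCLM P P).hasFDerivAt.comp x (hM.matrix_inv hx)).congr_fderiv ?_
  ext v
  change ⟪P, mApp (-((M x)⁻¹ * L v * (M x)⁻¹)) P⟫ =
    -⟪mApp (M x)⁻¹ P, mApp (L v) (mApp (M x)⁻¹ P)⟫
  rw [hsymm.inv.inner_mApp_left, ← mApp_mul, ← mApp_mul, ← inner_neg_right]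
  simp [mApp]

lemma inner_gradient_hamiltonian {n : ℕ}
    {M : EuclideanSpace ℝ (Fin n) → Matrix (Fin n) (Fin n) ℝ} {V : EuclideanSpace ℝ (Fin n) → ℝ}
    {Q : EuclideanSpace ℝ (Fin n)} (hM : ∀ i j, DifferentiableAt ℝ (fun x => M x i j) Q)
    (hMQ : (M Q).PosDef) (hV : DifferentiableAt ℝ V Q) (P v : EuclideanSpace ℝ (Fin n)) :
    ⟪gradient (fun x => (1/2) * ⟪P, mApp (M x)⁻¹ P⟫ + V x) Q, v⟫ =
      -(1/2) * ⟪mApp (Matrix.of fun i j => fderiv ℝ (fun x => M x i j) Q v) (mApp (M Q)⁻¹ P),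
        mApp (M Q)⁻¹ P⟫ + ⟪gradient V Q, v⟫ := by
  obtain ⟨L, hL, hLv⟩ := hasFDerivAt_matrix_of_entries hM
  have hH : HasFDerivAt (fun x => (1/2) * ⟪P, mApp (M x)⁻¹ P⟫ + V x) _ Q :=
    ((hL.inner_mApp_inv hMQ.isHermitian hMQ.isUnit P).const_mul (1/2 : ℝ)).add hV.hasFDerivAt
  rw [inner_gradient_left, inner_gradient_left, hH.fderiv, ← hLv, real_inner_comm]
  simp [innerMAppCLM_apply]

end MatrixCalculus

lemma momentum_time_derivative_eq_zero {n : ℕ}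
    {M D : EuclideanSpace ℝ (Fin n) → Matrix (Fin n) (Fin n) ℝ} {V : EuclideanSpace ℝ (Fin n) → ℝ}
    {a : EuclideanSpace ℝ (Fin n) → EuclideanSpace ℝ (Fin n)} {Q : EuclideanSpace ℝ (Fin n)}
    (hM : ∀ i j, DifferentiableAt ℝ (fun x => M x i j) Q) (hMQ : (M Q).PosDef)
    (hDQ : (D Q).IsHermitian) (hV : DifferentiableAt ℝ V Q)
    (hKilling : ∀ u : EuclideanSpace ℝ (Fin n),
      ⟪mApp (Matrix.of fun i j => fderiv ℝ (fun x => M x i j) Q (a Q)) u, u⟫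
        + 2 * ⟪mApp (M Q) (fderiv ℝ a Q u), u⟫ = 0)
    (hVinv : ⟪gradient V Q, a Q⟫ = 0) (hDa : mApp (D Q) (a Q) = 0)
    (ε : ℝ) (P : EuclideanSpace ℝ (Fin n)) :
    ⟪P, fderiv ℝ a Q (mApp (M Q)⁻¹ P)⟫
      + ⟪-(gradient (fun x => (1/2) * ⟪P, mApp (M x)⁻¹ P⟫ + V x) Q)
          - ε • mApp (D Q) (mApp (M Q)⁻¹ P), a Q⟫ = 0 := by
  have hgrad := inner_gradient_hamiltonian hM hMQ hV P (a Q)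
  set u := mApp (M Q)⁻¹ P
  have htransport : ⟪P, fderiv ℝ a Q u⟫ = ⟪mApp (M Q) (fderiv ℝ a Q u), u⟫ := by
    rw [hMQ.isHermitian.inner_mApp_left, real_inner_comm,
      mApp_mApp_inv ((Matrix.isUnit_iff_isUnit_det _).1 hMQ.isUnit)]
  have hdissipation : ⟪mApp (D Q) u, a Q⟫ = 0 := by
    rw [hDQ.inner_mApp_left, hDa, inner_zero_right]
  rw [inner_sub_left, inner_neg_left, real_inner_smul_left, hgrad, hVinv, hdissipation,
    htransport]
  linarith [hKilling u]

theorem noether_with_rayleigh_dissipation_general (n : ℕ)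
    (M D : EuclideanSpace ℝ (Fin n) → Matrix (Fin n) (Fin n) ℝ)
    (hM : ∀ i j, ContDiff ℝ 1 fun q => M q i j)
    (hMpd : ∀ q, (M q).PosDef) (hDpsd : ∀ q, (D q).PosSemidef)
    (V : EuclideanSpace ℝ (Fin n) → ℝ) (hV : ContDiff ℝ 1 V)
    (ε : ℝ)
    (a : EuclideanSpace ℝ (Fin n) → EuclideanSpace ℝ (Fin n)) (ha : ContDiff ℝ 1 a)
    (hKilling : ∀ q u : EuclideanSpace ℝ (Fin n),
      ⟪mApp (Matrix.of fun i j => fderiv ℝ (fun x => M x i j) q (a q)) u, u⟫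
        + 2 * ⟪mApp (M q) (fderiv ℝ a q u), u⟫ = 0)
    (hVinv : ∀ q, ⟪gradient V q, a q⟫ = 0)
    (hDa : ∀ q, mApp (D q) (a q) = 0)
    (q p : ℝ → EuclideanSpace ℝ (Fin n))
    (hq : ∀ t : ℝ, HasDerivAt q (mApp ((M (q t))⁻¹) (p t)) t)
    (hp : ∀ t : ℝ, HasDerivAt p
      (-(gradient (fun x => (1/2) * ⟪p t, mApp ((M x)⁻¹) (p t)⟫ + V x) (q t))
        - ε • mApp (D (q t)) (mApp ((M (q t))⁻¹) (p t))) t) :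
    ∀ t t' : ℝ, ⟪p t, a (q t)⟫ = ⟪p t', a (q t')⟫ := by
  have hJ : ∀ t, HasDerivAt (fun s => ⟪p s, a (q s)⟫) 0 t := by
    intro t
    have haq := (ha.differentiable one_ne_zero (q t)).hasFDerivAt.comp_hasDerivAt t (hq t)
    have hJt := (hp t).inner ℝ haq
    simp only [Function.comp_apply] at hJt
    rwa [momentum_time_derivative_eq_zero
      (fun i j => (hM i j).differentiable one_ne_zero (q t)) (hMpd (q t))
      (hDpsd (q t)).isHermitian (hV.differentiable one_ne_zero (q t)) (hKilling (q t))
      (hVinv (q t)) (hDa (q t))] at hJt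
  exact fun t t' => is_const_of_deriv_eq_zero (fun s => (hJ s).differentiableAt)
    (fun s => (hJ s).deriv) t t'

/-- Noether's theorem with Rayleigh dissipation: if the vector field `a` satisfies the
Killing condition for the metric `M`, leaves the potential `V` invariant, and lies in the
kernel of the dissipation tensor `D`, then the momentum `J(q,p) = ⟪p, a q⟫` is conserved
along every differentiable solution of the damped system
`q' = M(q)⁻¹ p`, `p' = -∇_q H(q,p) - ε D(q) M(q)⁻¹ p`,
where `H(q,p) = ½⟪p, M(q)⁻¹ p⟫ + V(q)`. -/
theorem noether_with_rayleigh_dissipation (n : ℕ)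
    (M D : EuclideanSpace ℝ (Fin n) → Matrix (Fin n) (Fin n) ℝ)
    (hM : ∀ i j, ContDiff ℝ 1 fun q => M q i j)
    (hD : ∀ i j, ContDiff ℝ 1 fun q => D q i j)
    (hMpd : ∀ q, (M q).PosDef) (hDpsd : ∀ q, (D q).PosSemidef)
    (V : EuclideanSpace ℝ (Fin n) → ℝ) (hV : ContDiff ℝ 1 V)
    (ε : ℝ) (hε : 0 ≤ ε)
    (a : EuclideanSpace ℝ (Fin n) → EuclideanSpace ℝ (Fin n)) (ha : ContDiff ℝ 1 a)
    (hKilling : ∀ q u : EuclideanSpace ℝ (Fin n),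
      ⟪mApp (Matrix.of fun i j => fderiv ℝ (fun x => M x i j) q (a q)) u, u⟫
        + 2 * ⟪mApp (M q) (fderiv ℝ a q u), u⟫ = 0)
    (hVinv : ∀ q, ⟪gradient V q, a q⟫ = 0)
    (hDa : ∀ q, mApp (D q) (a q) = 0)
    (q p : ℝ → EuclideanSpace ℝ (Fin n))
    (hq : ∀ t : ℝ, HasDerivAt q (mApp ((M (q t))⁻¹) (p t)) t)
    (hp : ∀ t : ℝ, HasDerivAt p
      (-(gradient (fun x => (1/2) * ⟪p t, mApp ((M x)⁻¹) (p t)⟫ + V x) (q t))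
        - ε • mApp (D (q t)) (mApp ((M (q t))⁻¹) (p t))) t) :
    ∀ t t' : ℝ, ⟪p t, a (q t)⟫ = ⟪p t', a (q t')⟫ :=
  noether_with_rayleigh_dissipation_general n M D hM hMpd hDpsd V hV ε a ha hKilling hVinv hDa q p
    hq hp
end

section
/- Momentum conservation by the splitting maps: let n ∈ ℕ, let M be a constant symmetric positive definite n×n real matrix, V : ℝⁿ → ℝ be C¹, D : ℝⁿ → Matrix (Fin n) (Fin n) ℝ with D(q) symmetric for every q, and ε ≥ 0. Let A be an n×n real matrix with M A skew-symmetric (i.e. (M A)ᵀ = −M A), let b ∈ ℝⁿ, and set a(q) = A q + b and J(q,p) = ⟨p, a(q)⟩. Assume ⟨∇V(q), a(q)⟩ = 0 and D(q) a(q) = 0 for all q. Then for every τ ∈ ℝ, each of the following maps of ℝⁿ × ℝⁿ leaves J invariant: (i) the drift map (q,p) ↦ (q + τ • M⁻¹p, p); (ii) the kick map (q,p) ↦ (q, p − τ • ∇V(q)); (iii) the dissipative map (q,p) ↦ (q, exp(−τ ε D(q) M⁻¹) p), where exp is the matrix exponential. Consequently any composition of such maps (in particular the splitting integrators built from them) exactly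 conserves the momentum J. -/
open scoped RealInnerProductSpace
open Matrix

/-!
The drift changes `J` by `τ ⟪p, A M⁻¹ p⟫ = τ ⟪y, (M A) y⟫` with `y = M⁻¹ p`, which vanishes since
`M A` is skew-symmetric. The kick moves `p` along `∇V(q)`, which is orthogonal to `a(q)`. For the
dissipative map, `M` and `D(q)` being symmetric, the transpose of `exp(-τ ε D(q) M⁻¹)` is
`exp(-τ ε M⁻¹ D(q))`, which fixes `a(q)` because `D(q) a(q) = 0`.
-/

namespace Matrix

variable {ι : Type*} [Fintype ι] [DecidableEq ι]

open scoped Norms.Operator in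
theorem exp_mulVec_eq_self_of_mulVec_eq_zero {𝕜 : Type*} [RCLike 𝕜] {X : Matrix ι ι 𝕜}
    {v : ι → 𝕜} (h : X *ᵥ v = 0) : NormedSpace.exp X *ᵥ v = v := by
  have hsum := (NormedSpace.exp_series_hasSum_exp' (𝕂 := 𝕜) X).map
    ((mulVecBilin 𝕜 𝕜).flip v) (continuous_id.matrix_mulVec continuous_const)
  refine hsum.unique (hasSum_single 0 fun k hk => ?_) |>.trans ?_
  · obtain ⟨k, rfl⟩ := Nat.exists_eq_succ_of_ne_zero hk
    simp [pow_succ, h]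
  · simp

theorem inner_toEuclideanLin_left (A : Matrix ι ι ℝ) (x y : EuclideanSpace ℝ ι) :
    ⟪A.toEuclideanLin x, y⟫ = ⟪x, Aᵀ.toEuclideanLin y⟫ := by
  rw [← conjTranspose_eq_transpose_of_trivial, toEuclideanLin_conjTranspose_eq_adjoint,
    LinearMap.adjoint_inner_right]

theorem inner_toEuclideanLin_self_eq_zero_of_transpose_eq_neg {S : Matrix ι ι ℝ}
    (hS : Sᵀ = -S) (x : EuclideanSpace ℝ ι) : ⟪x, S.toEuclideanLin x⟫ = 0 := by
  have h : ⟪x, S.toEuclideanLin x⟫ = -⟪x, S.toEuclideanLin x⟫ := calc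
    ⟪x, S.toEuclideanLin x⟫ = ⟪Sᵀ.toEuclideanLin x, x⟫ := by
      rw [inner_toEuclideanLin_left, transpose_transpose]
    _ = -⟪x, S.toEuclideanLin x⟫ := by
      rw [hS, map_neg, LinearMap.neg_apply, inner_neg_left, real_inner_comm]
  linarith

theorem inner_toEuclideanLin_toEuclideanLin_inv_eq_zero {M A : Matrix ι ι ℝ} (hM : Mᵀ = M)
    (hM' : IsUnit M) (hMA : (M * A)ᵀ = -(M * A)) (p : EuclideanSpace ℝ ι) :
    ⟪p, A.toEuclideanLin (M⁻¹.toEuclideanLin p)⟫ = 0 := by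
  set y := M⁻¹.toEuclideanLin p
  have hp : p = M.toEuclideanLin y := by
    rw [← LinearMap.comp_apply, ← toLpLin_mul_same,
      mul_nonsing_inv _ ((isUnit_iff_isUnit_det M).mp hM'), toLpLin_one, LinearMap.id_apply]
  rw [hp, inner_toEuclideanLin_left, hM, ← LinearMap.comp_apply, ← toLpLin_mul_same]
  exact inner_toEuclideanLin_self_eq_zero_of_transpose_eq_neg hMA y

theorem inner_toEuclideanLin_exp_smul_mul_inv_left {M D : Matrix ι ι ℝ} (hM : Mᵀ = M)
    (hD : Dᵀ = D) {a : EuclideanSpace ℝ ι} (hDa : D.toEuclideanLin a = 0) (c : ℝ)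
    (p : EuclideanSpace ℝ ι) :
    ⟪(NormedSpace.exp (c • (D * M⁻¹))).toEuclideanLin p, a⟫ = ⟪p, a⟫ := by
  have hexp : (NormedSpace.exp (c • (D * M⁻¹)))ᵀ = NormedSpace.exp (c • (M⁻¹ * D)) := by
    rw [← exp_transpose, transpose_smul, transpose_mul, transpose_nonsing_inv, hM, hD]
  have hker : (c • (M⁻¹ * D)) *ᵥ WithLp.ofLp a = 0 := by
    rw [smul_mulVec, ← mulVec_mulVec, ← toLin'_apply D, ← ofLp_toLpLin 2 2, hDa]
    simp
  rw [inner_toEuclideanLin_left, hexp, toLpLin_apply,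
    exp_mulVec_eq_self_of_mulVec_eq_zero hker, WithLp.toLp_ofLp]

end Matrix

theorem splitting_maps_conserve_momentum_general (n : ℕ)
    (M : Matrix (Fin n) (Fin n) ℝ) (hM : M.PosDef)
    (V : EuclideanSpace ℝ (Fin n) → ℝ)
    (D : EuclideanSpace ℝ (Fin n) → Matrix (Fin n) (Fin n) ℝ)
    (hDsym : ∀ q, (D q).IsSymm)
    (ε : ℝ)
    (A : Matrix (Fin n) (Fin n) ℝ) (hA : (M * A)ᵀ = -(M * A))
    (b : EuclideanSpace ℝ (Fin n))
    (hVa : ∀ q : EuclideanSpace ℝ (Fin n), ⟪gradient V q, mApp A q + b⟫ = 0)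
    (hDa : ∀ q : EuclideanSpace ℝ (Fin n), mApp (D q) (mApp A q + b) = 0) :
    ∀ τ : ℝ, ∀ q p : EuclideanSpace ℝ (Fin n),
      (⟪p, mApp A (q + τ • mApp M⁻¹ p) + b⟫ = ⟪p, mApp A q + b⟫) ∧
      (⟪p - τ • gradient V q, mApp A q + b⟫ = ⟪p, mApp A q + b⟫) ∧
      (⟪mApp (NormedSpace.exp ((-(τ * ε)) • (D q * M⁻¹))) p, mApp A q + b⟫
        = ⟪p, mApp A q + b⟫) := by
  have hMsymm : Mᵀ = M := hM.isHermitian.eq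
  intro τ q p
  refine ⟨?_, ?_, ?_⟩
  · simp only [mApp]
    rw [map_add, map_smul, add_right_comm, inner_add_right, real_inner_smul_right,
      inner_toEuclideanLin_toEuclideanLin_inv_eq_zero hMsymm hM.isUnit hA, mul_zero, add_zero]
  · rw [inner_sub_left, real_inner_smul_left, hVa, mul_zero, sub_zero]
  · exact inner_toEuclideanLin_exp_smul_mul_inv_left hMsymm (hDsym q) (hDa q) _ p

/-- Momentum conservation by the splitting maps: for the affine infinitesimal symmetry
`a(q) = A q + b` with `M A` skew-symmetric, `⟪∇V(q), a(q)⟫ = 0` and `D(q) a(q) = 0`, the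
momentum `J(q,p) = ⟪p, A q + b⟫` is exactly conserved by the drift map
`(q,p) ↦ (q + τ M⁻¹ p, p)`, the kick map `(q,p) ↦ (q, p - τ ∇V(q))`, and the dissipative
map `(q,p) ↦ (q, exp(-τ ε D(q) M⁻¹) p)`; hence by any composition of such maps. -/
theorem splitting_maps_conserve_momentum (n : ℕ)
    (M : Matrix (Fin n) (Fin n) ℝ) (hM : M.PosDef)
    (V : EuclideanSpace ℝ (Fin n) → ℝ) (hV : ContDiff ℝ 1 V)
    (D : EuclideanSpace ℝ (Fin n) → Matrix (Fin n) (Fin n) ℝ)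
    (hDsym : ∀ q, (D q).IsSymm)
    (ε : ℝ) (hε : 0 ≤ ε)
    (A : Matrix (Fin n) (Fin n) ℝ) (hA : (M * A)ᵀ = -(M * A))
    (b : EuclideanSpace ℝ (Fin n))
    (hVa : ∀ q : EuclideanSpace ℝ (Fin n), ⟪gradient V q, mApp A q + b⟫ = 0)
    (hDa : ∀ q : EuclideanSpace ℝ (Fin n), mApp (D q) (mApp A q + b) = 0) :
    ∀ τ : ℝ, ∀ q p : EuclideanSpace ℝ (Fin n),
      (⟪p, mApp A (q + τ • mApp M⁻¹ p) + b⟫ = ⟪p, mApp A q + b⟫) ∧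
      (⟪p - τ • gradient V q, mApp A q + b⟫ = ⟪p, mApp A q + b⟫) ∧
      (⟪mApp (NormedSpace.exp ((-(τ * ε)) • (D q * M⁻¹))) p, mApp A q + b⟫
        = ⟪p, mApp A q + b⟫) :=
  splitting_maps_conserve_momentum_general n M hM V D hDsym ε A hA b hVa hDa
end

section
/- Along every differentiable solution (q, p) : I → ℝ³ × ℝ³ of the damped elastic pendulum equations q'(t) = p(t)/m, p'(t) = −k(1 − ℓ/‖q(t)‖) • q(t) + (0, 0, −m g₀) − (ε/(m‖q(t)‖²)) • ⟨q(t), p(t)⟩ • q(t), with q(t) ≠ 0 for all t ∈ I, the azimuthal angular momentum J₃(q(t), p(t)) = (q(t) ×₃ p(t))₃ (the third component of the cross product of q and p) is constant in time, for every ε ≥ 0. -/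
open scoped RealInnerProductSpace

/-- The azimuthal angular momentum `J₃(q, p) = (q × p)₃`, the third component of the
cross product of `q` and `p` in `ℝ³`. -/
def J3 (q p : EuclideanSpace ℝ (Fin 3)) : ℝ := q 0 * p 1 - q 1 * p 0

/-- The gravity vector `(0, 0, -m g₀)`. -/
def grav (m g₀ : ℝ) : EuclideanSpace ℝ (Fin 3) := WithLp.toLp 2 ![0, 0, -(m * g₀)]

/-! `J₃` is bilinear and antisymmetric, so along a solution
`d/dt J₃(q, p) = J₃(p/m, p) + J₃(q, F) = J₃(q, F)`. The force `F` is a multiple of `q` plus the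
vertical gravity vector, and `J₃` vanishes on both: the radial spring and radial damping exert
no torque, and gravity exerts none about the vertical axis. -/

theorem Set.OrdConnected.eq_of_forall_hasDerivAt_zero {E : Type*} [NormedAddCommGroup E]
    [NormedSpace ℝ E] {s : Set ℝ} (hs : s.OrdConnected) {f : ℝ → E}
    (hf : ∀ t ∈ s, HasDerivAt f 0 t) {x y : ℝ} (hx : x ∈ s) (hy : y ∈ s) : f x = f y := by
  have h := (convex_iff_ordConnected.2 hs).norm_image_sub_le_of_norm_hasDerivWithin_le
    (fun t ht => (hf t ht).hasDerivWithinAt) (C := 0) (fun _ _ => by simp) hx hy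
  simpa [sub_eq_zero, eq_comm] using h

section J3

variable (a : ℝ) (u v w : EuclideanSpace ℝ (Fin 3))

theorem J3_self : J3 v v = 0 := by
  unfold J3; ring

theorem J3_smul_left : J3 (a • v) w = a * J3 v w := by
  simp only [J3, PiLp.smul_apply, smul_eq_mul]; ring

theorem J3_smul_right : J3 v (a • w) = a * J3 v w := by
  simp only [J3, PiLp.smul_apply, smul_eq_mul]; ring

theorem J3_add_right : J3 u (v + w) = J3 u v + J3 u w := by
  simp only [J3, PiLp.add_apply]; ring

theorem J3_sub_right : J3 u (v - w) = J3 u v - J3 u w := by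
  simp only [J3, PiLp.sub_apply]; ring

theorem J3_grav_right (m g₀ : ℝ) : J3 v (grav m g₀) = 0 := by
  simp [J3, grav]

theorem HasDerivAt.J3 {q p : ℝ → EuclideanSpace ℝ (Fin 3)} {q' p' : EuclideanSpace ℝ (Fin 3)}
    {t : ℝ} (hq : HasDerivAt q q' t) (hp : HasDerivAt p p' t) :
    HasDerivAt (fun s => J3 (q s) (p s)) (J3 q' (p t) + J3 (q t) p') t := by
  have hqi (i : Fin 3) : HasDerivAt (fun s => q s i) (q' i) t :=
    (EuclideanSpace.proj (𝕜 := ℝ) i).hasFDerivAt.comp_hasDerivAt t hq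
  have hpi (i : Fin 3) : HasDerivAt (fun s => p s i) (p' i) t :=
    (EuclideanSpace.proj (𝕜 := ℝ) i).hasFDerivAt.comp_hasDerivAt t hp
  refine (((hqi 0).mul (hpi 1)).sub ((hqi 1).mul (hpi 0))).congr_deriv ?_
  unfold _root_.J3; ring

end J3

theorem elastic_pendulum_conserves_azimuthal_momentum_general
    (m k ℓ : ℝ) (g₀ : ℝ)
    (ε : ℝ)
    (I : Set ℝ) (hI : I.OrdConnected)
    (q p : ℝ → EuclideanSpace ℝ (Fin 3))
    (hq : ∀ t ∈ I, HasDerivAt q (m⁻¹ • p t) t)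
    (hp : ∀ t ∈ I, HasDerivAt p
      ((-(k * (1 - ℓ / ‖q t‖))) • q t + grav m g₀
        - (ε / (m * ‖q t‖ ^ 2)) • (⟪q t, p t⟫ • q t)) t) :
    ∀ t ∈ I, ∀ t' ∈ I, J3 (q t) (p t) = J3 (q t') (p t') := by
  intro t ht t' ht'
  refine hI.eq_of_forall_hasDerivAt_zero (f := fun s => J3 (q s) (p s)) (fun s hs => ?_) ht ht'
  refine ((hq s hs).J3 (hp s hs)).congr_deriv ?_
  simp only [J3_smul_left, J3_smul_right, J3_add_right, J3_sub_right, J3_self, J3_grav_right,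
    mul_zero, add_zero, sub_zero]

/-- Along every differentiable solution of the damped elastic pendulum equations
`q' = p/m`, `p' = -k(1 - ℓ/‖q‖) q + (0,0,-m g₀) - (ε/(m ‖q‖²)) ⟪q,p⟫ q` with `q(t) ≠ 0`,
the azimuthal angular momentum `J₃(q,p)` is constant in time, for every `ε ≥ 0`. -/
theorem elastic_pendulum_conserves_azimuthal_momentum
    (m k ℓ : ℝ) (hm : 0 < m) (hk : 0 < k) (hl : 0 < ℓ) (g₀ : ℝ)
    (ε : ℝ) (hε : 0 ≤ ε)
    (I : Set ℝ) (hI : I.OrdConnected)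
    (q p : ℝ → EuclideanSpace ℝ (Fin 3))
    (hq0 : ∀ t ∈ I, q t ≠ 0)
    (hq : ∀ t ∈ I, HasDerivAt q (m⁻¹ • p t) t)
    (hp : ∀ t ∈ I, HasDerivAt p
      ((-(k * (1 - ℓ / ‖q t‖))) • q t + grav m g₀
        - (ε / (m * ‖q t‖ ^ 2)) • (⟪q t, p t⟫ • q t)) t) :
    ∀ t ∈ I, ∀ t' ∈ I, J3 (q t) (p t) = J3 (q t') (p t') :=
  elastic_pendulum_conserves_azimuthal_momentum_general m k ℓ g₀ ε I hI q p hq hp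
end

section
/- Rotating relative equilibria of the damped elastic pendulum: let m, k, ℓ, g₀ > 0, ρ₀ > 0, z₀ ∈ ℝ, ω ∈ ℝ, φ₀ ∈ ℝ, and set R = Real.sqrt(ρ₀² + z₀²). Assume the equilibrium conditions m ω² = k (1 − ℓ/R) and k (1 − ℓ/R) z₀ = −m g₀. Define q(t) = (ρ₀ cos(ω t + φ₀), ρ₀ sin(ω t + φ₀), z₀) and p(t) = (−m ρ₀ ω sin(ω t + φ₀), m ρ₀ ω cos(ω t + φ₀), 0). Then q(t) ≠ 0 for all t, ⟨q(t), p(t)⟩ = 0 for all t, and for EVERY ε ≥ 0 the curve (q, p) is a solution of the damped elastic pendulum equations q' = p/m, p' = −k(1 − ℓ/‖q‖) q + (0,0,−m g₀) − (ε/(m‖q‖²)) ⟨q, p⟩ q; that is, uniform rotation about the vertical axis with angular velocity ω is a relative equilibrium of the damped system. -/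
open scoped RealInnerProductSpace

/-- The configuration of a uniformly rotating pendulum:
`q(t) = (ρ₀ cos(ω t + φ₀), ρ₀ sin(ω t + φ₀), z₀)`. -/
noncomputable def qRE (ρ₀ z₀ ω φ₀ : ℝ) (t : ℝ) : EuclideanSpace ℝ (Fin 3) :=
  WithLp.toLp 2 ![ρ₀ * Real.cos (ω * t + φ₀), ρ₀ * Real.sin (ω * t + φ₀), z₀]

/-- The momentum of a uniformly rotating pendulum:
`p(t) = (-m ρ₀ ω sin(ω t + φ₀), m ρ₀ ω cos(ω t + φ₀), 0)`. -/
noncomputable def pRE (m ρ₀ ω φ₀ : ℝ) (t : ℝ) : EuclideanSpace ℝ (Fin 3) :=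
  WithLp.toLp 2 ![-(m * ρ₀ * ω) * Real.sin (ω * t + φ₀), m * ρ₀ * ω * Real.cos (ω * t + φ₀), 0]

/-!
Along the uniform rotation `‖q‖` is the constant `R` and `p` is horizontal and orthogonal to
`q`, so the Rayleigh term vanishes whatever `ε` is. The equilibrium conditions say that the spring
force `-k (1 - ℓ/R) q` cancels gravity vertically and is horizontally the centripetal force
`-m ω² (ρ₀ cos θ, ρ₀ sin θ, 0)` (with `θ = ω t + φ₀`), which is exactly `p'`.
-/

theorem hasDerivAt_piLp {𝕜 ι : Type*} [NontriviallyNormedField 𝕜] [Fintype ι] {E : ι → Type*}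
    [∀ i, NormedAddCommGroup (E i)] [∀ i, NormedSpace 𝕜 (E i)] (p : ENNReal) [Fact (1 ≤ p)]
    {f : 𝕜 → PiLp p E} {f' : PiLp p E} {x : 𝕜} :
    HasDerivAt f f' x ↔ ∀ i, HasDerivAt (fun y => f y i) (f' i) x := by
  rw [← hasDerivAt_pi]
  exact ⟨fun h => (PiLp.continuousLinearEquiv p 𝕜 E).hasFDerivAt.comp_hasDerivAt x h,
    fun h => (PiLp.continuousLinearEquiv p 𝕜 E).symm.hasFDerivAt.comp_hasDerivAt x h⟩

section RotatingPendulum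

variable (m ρ₀ z₀ ω φ₀ t : ℝ)

theorem hasDerivAt_phase : HasDerivAt (fun s => ω * s + φ₀) ω t := by
  simpa using ((hasDerivAt_id t).const_mul ω).add_const φ₀

theorem norm_qRE : ‖qRE ρ₀ z₀ ω φ₀ t‖ = √(ρ₀ ^ 2 + z₀ ^ 2) := by
  rw [EuclideanSpace.norm_eq]
  congr 1
  simp [qRE, Fin.sum_univ_three]
  linear_combination ρ₀ ^ 2 * Real.cos_sq_add_sin_sq (ω * t + φ₀)

theorem qRE_ne_zero (hρ : ρ₀ ≠ 0) : qRE ρ₀ z₀ ω φ₀ t ≠ 0 := by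
  rw [← norm_pos_iff, norm_qRE]
  positivity

theorem inner_qRE_pRE : ⟪qRE ρ₀ z₀ ω φ₀ t, pRE m ρ₀ ω φ₀ t⟫ = 0 := by
  simp [qRE, pRE, PiLp.inner_apply, Fin.sum_univ_three]
  ring

theorem hasDerivAt_qRE (hm : m ≠ 0) :
    HasDerivAt (qRE ρ₀ z₀ ω φ₀) (m⁻¹ • pRE m ρ₀ ω φ₀ t) t := by
  rw [hasDerivAt_piLp]
  intro i
  fin_cases i
  · exact ((hasDerivAt_phase ω φ₀ t).cos.const_mul ρ₀).congr_deriv (by simp [pRE]; field_simp)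
  · exact ((hasDerivAt_phase ω φ₀ t).sin.const_mul ρ₀).congr_deriv (by simp [pRE]; field_simp)
  · exact (hasDerivAt_const t z₀).congr_deriv (by simp [pRE])

theorem hasDerivAt_pRE :
    HasDerivAt (pRE m ρ₀ ω φ₀) (-(m * ω ^ 2) • qRE ρ₀ 0 ω φ₀ t) t := by
  rw [hasDerivAt_piLp]
  intro i
  fin_cases i
  · exact ((hasDerivAt_phase ω φ₀ t).sin.const_mul (-(m * ρ₀ * ω))).congr_deriv
      (by simp [qRE]; ring)
  · exact ((hasDerivAt_phase ω φ₀ t).cos.const_mul (m * ρ₀ * ω)).congr_deriv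
      (by simp [qRE]; ring)
  · exact (hasDerivAt_const t (0 : ℝ)).congr_deriv (by simp [qRE])

theorem neg_smul_qRE_add_grav {g₀ c : ℝ} (hω : m * ω ^ 2 = c) (hz : c * z₀ = -(m * g₀)) :
    -c • qRE ρ₀ z₀ ω φ₀ t + grav m g₀ = -(m * ω ^ 2) • qRE ρ₀ 0 ω φ₀ t := by
  subst hω
  ext i
  fin_cases i <;> simp [qRE, grav]; linarith

end RotatingPendulum

theorem rotating_relative_equilibrium_general
    (m k ℓ g₀ ρ₀ : ℝ) (hm : 0 < m)
    (hρ : 0 < ρ₀) (z₀ ω φ₀ : ℝ)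
    (R : ℝ) (hR : R = Real.sqrt (ρ₀ ^ 2 + z₀ ^ 2))
    (h1 : m * ω ^ 2 = k * (1 - ℓ / R))
    (h2 : k * (1 - ℓ / R) * z₀ = -(m * g₀)) :
    ∀ ε : ℝ, 0 ≤ ε → ∀ t : ℝ,
      qRE ρ₀ z₀ ω φ₀ t ≠ 0 ∧
      ⟪qRE ρ₀ z₀ ω φ₀ t, pRE m ρ₀ ω φ₀ t⟫ = 0 ∧
      HasDerivAt (qRE ρ₀ z₀ ω φ₀) (m⁻¹ • pRE m ρ₀ ω φ₀ t) t ∧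
      HasDerivAt (pRE m ρ₀ ω φ₀)
        ((-(k * (1 - ℓ / ‖qRE ρ₀ z₀ ω φ₀ t‖))) • qRE ρ₀ z₀ ω φ₀ t + grav m g₀
          - (ε / (m * ‖qRE ρ₀ z₀ ω φ₀ t‖ ^ 2))
              • (⟪qRE ρ₀ z₀ ω φ₀ t, pRE m ρ₀ ω φ₀ t⟫ • qRE ρ₀ z₀ ω φ₀ t)) t := by
  intro ε _ t
  have hnorm : ‖qRE ρ₀ z₀ ω φ₀ t‖ = R := by rw [hR, norm_qRE]
  have hinner := inner_qRE_pRE m ρ₀ z₀ ω φ₀ t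
  refine ⟨qRE_ne_zero ρ₀ z₀ ω φ₀ t hρ.ne', hinner, hasDerivAt_qRE m ρ₀ z₀ ω φ₀ t hm.ne', ?_⟩
  rw [hnorm, hinner, zero_smul, smul_zero, sub_zero, neg_smul_qRE_add_grav m ρ₀ z₀ ω φ₀ t h1 h2]
  exact hasDerivAt_pRE m ρ₀ ω φ₀ t

/-- Rotating relative equilibria of the damped elastic pendulum: under the equilibrium
conditions `m ω² = k (1 - ℓ/R)` and `k (1 - ℓ/R) z₀ = -m g₀` with `R = √(ρ₀² + z₀²)`,
uniform rotation about the vertical axis is, for EVERY `ε ≥ 0`, a solution of the damped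
elastic pendulum equations
`q' = p/m`, `p' = -k(1 - ℓ/‖q‖) q + (0,0,-m g₀) - (ε/(m ‖q‖²)) ⟪q,p⟫ q`,
along which `q(t) ≠ 0` and `⟪q(t), p(t)⟫ = 0`. -/
theorem rotating_relative_equilibrium
    (m k ℓ g₀ ρ₀ : ℝ) (hm : 0 < m) (hk : 0 < k) (hl : 0 < ℓ) (hg : 0 < g₀)
    (hρ : 0 < ρ₀) (z₀ ω φ₀ : ℝ)
    (R : ℝ) (hR : R = Real.sqrt (ρ₀ ^ 2 + z₀ ^ 2))
    (h1 : m * ω ^ 2 = k * (1 - ℓ / R))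
    (h2 : k * (1 - ℓ / R) * z₀ = -(m * g₀)) :
    ∀ ε : ℝ, 0 ≤ ε → ∀ t : ℝ,
      qRE ρ₀ z₀ ω φ₀ t ≠ 0 ∧
      ⟪qRE ρ₀ z₀ ω φ₀ t, pRE m ρ₀ ω φ₀ t⟫ = 0 ∧
      HasDerivAt (qRE ρ₀ z₀ ω φ₀) (m⁻¹ • pRE m ρ₀ ω φ₀ t) t ∧
      HasDerivAt (pRE m ρ₀ ω φ₀)
        ((-(k * (1 - ℓ / ‖qRE ρ₀ z₀ ω φ₀ t‖))) • qRE ρ₀ z₀ ω φ₀ t + grav m g₀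
          - (ε / (m * ‖qRE ρ₀ z₀ ω φ₀ t‖ ^ 2))
              • (⟪qRE ρ₀ z₀ ω φ₀ t, pRE m ρ₀ ω φ₀ t⟫ • qRE ρ₀ z₀ ω φ₀ t)) t :=
  rotating_relative_equilibrium_general m k ℓ g₀ ρ₀ hm hρ z₀ ω φ₀ R hR h1 h2
end
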